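/- arXiv:2506.04863 — 9 statements merged into one kernel-verified Lean document; each statement's English description precedes it below -/
import Mathlib

section
/- Let A, B ∈ ℝ^{n×n} be Schur-stable nonnegative matrices. If there exists a positive definite diagonal matrix E with A^T E A − E ≺ 0 and B^T E B − E ≺ 0 (both negative definite), then the same E satisfies (A−I)^T E + E(A−I) ≺ 0 and (B−I)^T E + E(B−I) ≺ 0. -/
open Matrix
open scoped ENNReal

/-- Spectral radius of a real matrix: the spectral radius of its complexification. -/
noncomputable def specRad {m : Type*} [Fintype m] [DecidableEq m]
    (A : Matrix m m ℝ) : ℝ≥0∞ :=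
  spectralRadius ℂ (A.map Complex.ofReal)

lemma aux_lyap {n : ℕ} (A E : Matrix (Fin n) (Fin n) ℝ) (hEpos : E.PosDef)
    (hSA : (-(Aᵀ * E * A - E)).PosDef) :
    (-((A - 1)ᵀ * E + E * (A - 1))).PosDef := by
  have hkey : -((A - 1)ᵀ * E + E * (A - 1))
      = -(Aᵀ * E * A - E) + (A - 1)ᵀ * E * (A - 1) := by
    simp only [Matrix.transpose_sub, Matrix.transpose_one]
    noncomm_ring
  rw [hkey]
  have h2 := hEpos.posSemidef.conjTranspose_mul_mul_same (A - 1)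
  rw [conjTranspose_eq_transpose_of_trivial] at h2
  exact hSA.add_posSemidef h2

/-- a common diagonal solution of the Stein inequalities for Schur-stable
nonnegative A, B also solves the corresponding Lyapunov inequalities for A−I, B−I. -/
theorem stmt1 {n : ℕ} (A B E : Matrix (Fin n) (Fin n) ℝ)
    (hA0 : ∀ i j, 0 ≤ A i j) (hB0 : ∀ i j, 0 ≤ B i j)
    (hAs : specRad A < 1) (hBs : specRad B < 1)
    (hEdiag : E.IsDiag) (hEpos : E.PosDef)
    (hSA : (-(Aᵀ * E * A - E)).PosDef) (hSB : (-(Bᵀ * E * B - E)).PosDef) :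
    (-((A - 1)ᵀ * E + E * (A - 1))).PosDef ∧
    (-((B - 1)ᵀ * E + E * (B - 1))).PosDef :=
  ⟨aux_lyap A E hEpos hSA, aux_lyap B E hEpos hSB⟩
end

section
/- Let A, B ∈ ℝ^{n×n} be Schur-stable nonnegative matrices. Suppose there exists a positive definite diagonal matrix E with (A−I)^T E + E(A−I) ≺ 0 and (B−I)^T E + E(B−I) ≺ 0. Then for every diagonal nonnegative matrix D with A − D ≥ 0 and B − D ≥ 0 (entrywise), the 2n×2n block matrix M = [[A−D, D],[D, B−D]] is Schur-stable, i.e., ρ(M) < 1. -/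
open Matrix
open scoped ENNReal

/-- Eigenvector extraction from spectrum membership. -/
lemma specRad.exists_eigvec {m : Type*} [Fintype m] [DecidableEq m] (M : Matrix m m ℂ)
    {k : ℂ} (hk : k ∈ spectrum ℂ M) : ∃ v : m → ℂ, v ≠ 0 ∧ M.mulVec v = k • v := by
  rw [spectrum.mem_iff] at hk
  rw [Matrix.isUnit_iff_isUnit_det, isUnit_iff_ne_zero, not_not] at hk
  obtain ⟨v, hv, hMv⟩ := (Matrix.exists_mulVec_eq_zero_iff).mpr hk
  refine ⟨v, hv, ?_⟩
  rw [sub_mulVec] at hMv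
  have h2 : (algebraMap ℂ (Matrix m m ℂ) k).mulVec v = k • v := by
    ext i
    simp [Matrix.algebraMap_matrix_apply, mulVec, dotProduct]
  rw [sub_eq_zero] at hMv
  rw [← hMv, h2]

/-- A nonnegative matrix admitting a strict diagonal Lyapunov-type quadratic
inequality has spectral radius less than one. -/
lemma specRad.lt_one_of_lyap {m : Type*} [Fintype m] [DecidableEq m]
    (M : Matrix m m ℝ) (hM : ∀ i j, 0 ≤ M i j)
    (g : m → ℝ) (hg : ∀ i, 0 < g i)
    (hlyap : ∀ y : m → ℝ, y ≠ 0 → (∀ i, 0 ≤ y i) →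
      ∑ i, g i * y i * (M.mulVec y i) < ∑ i, g i * (y i)^2) :
    specRad M < 1 := by
  have hnorm : ∀ k ∈ spectrum ℂ (M.map Complex.ofReal), ‖k‖ < 1 := by
    intro k hk
    obtain ⟨v, hv, hMv⟩ := specRad.exists_eigvec _ hk
    set y : m → ℝ := fun i => ‖v i‖ with hy
    have hy0 : ∀ i, 0 ≤ y i := fun i => norm_nonneg _
    have hyne : y ≠ 0 := by
      intro h
      apply hv; ext i
      have := congrFun h i
      simpa [hy] using this
    have hkey : ∀ i, ‖k‖ * y i ≤ M.mulVec y i := by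
      intro i
      have h1 : ‖(M.map Complex.ofReal).mulVec v i‖ = ‖k‖ * y i := by
        rw [hMv]; simp [hy, norm_smul]
      have h2 : ‖(M.map Complex.ofReal).mulVec v i‖ ≤ M.mulVec y i := by
        rw [mulVec, dotProduct]
        refine (norm_sum_le _ _).trans ?_
        rw [mulVec, dotProduct]
        apply Finset.sum_le_sum
        intro j _
        rw [norm_mul, map_apply, Complex.norm_real]
        rw [Real.norm_of_nonneg (hM i j)]
      linarith [h1 ▸ h2]
    have hsum : ∑ i, g i * (y i)^2 > 0 := by
      have : ∃ i, y i ≠ 0 := by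
        by_contra h; push_neg at h; apply hyne; ext i; exact h i
      obtain ⟨i0, hi0⟩ := this
      have : ∀ i ∈ Finset.univ, 0 ≤ g i * (y i)^2 :=
        fun i _ => mul_nonneg (hg i).le (sq_nonneg _)
      refine Finset.sum_pos' this ⟨i0, Finset.mem_univ _, ?_⟩
      exact mul_pos (hg i0) (pow_two_pos_of_ne_zero hi0)
    have hle : ‖k‖ * ∑ i, g i * (y i)^2 ≤ ∑ i, g i * y i * (M.mulVec y i) := by
      rw [Finset.mul_sum]
      apply Finset.sum_le_sum
      intro i _
      have := hkey i
      have hgy : 0 ≤ g i * y i := mul_nonneg (hg i).le (hy0 i)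
      calc ‖k‖ * (g i * y i ^ 2) = g i * y i * (‖k‖ * y i) := by ring
        _ ≤ g i * y i * (M.mulVec y i) := mul_le_mul_of_nonneg_left this hgy
    have := hlyap y hyne hy0
    nlinarith
  have hfin := Matrix.finite_spectrum (R := ℂ) (M.map Complex.ofReal)
  rw [specRad, spectralRadius]
  have hbound : ∀ k ∈ spectrum ℂ (M.map Complex.ofReal),
      (‖k‖₊ : ℝ≥0∞) ≤ hfin.toFinset.sup (fun k : ℂ => (‖k‖₊ : ℝ≥0∞)) := by
    intro k hk
    exact Finset.le_sup (f := fun k : ℂ => (‖k‖₊ : ℝ≥0∞)) (hfin.mem_toFinset.mpr hk)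
  refine lt_of_le_of_lt (iSup₂_le hbound) ?_
  rw [Finset.sup_lt_iff (by norm_num : (⊥ : ℝ≥0∞) < 1)]
  intro k hk
  have := hnorm k (hfin.mem_toFinset.mp hk)
  exact ENNReal.coe_lt_one_iff.mpr (by exact_mod_cast this)

/-- The strict quadratic inequality coming from a diagonal Lyapunov solution. -/
lemma specRad.quad_lt {n : ℕ} (A E : Matrix (Fin n) (Fin n) ℝ) (f : Fin n → ℝ)
    (hEmul : ∀ w : Fin n → ℝ, E *ᵥ w = fun i => f i * w i)
    (h : (-((A - 1)ᵀ * E + E * (A - 1))).PosDef) (x : Fin n → ℝ) (hx : x ≠ 0) :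
    ∑ i, f i * x i * (A *ᵥ x) i < ∑ i, f i * (x i)^2 := by
  have h0 := h.dotProduct_mulVec_pos (x := x) hx
  rw [star_trivial] at h0
  have t1 : x ⬝ᵥ (((A-1)ᵀ*E) *ᵥ x) = ((A-1) *ᵥ x) ⬝ᵥ (E *ᵥ x) := by
    rw [← mulVec_mulVec, dotProduct_mulVec, vecMul_transpose]
  have t2 : x ⬝ᵥ ((E*(A-1)) *ᵥ x) = x ⬝ᵥ (E *ᵥ ((A-1) *ᵥ x)) := by
    rw [mulVec_mulVec]
  have key : x ⬝ᵥ ((-((A - 1)ᵀ * E + E * (A - 1))) *ᵥ x)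
      = ∑ i, (2 * (f i * (x i)^2 - f i * x i * (A *ᵥ x) i)) := by
    rw [neg_mulVec, dotProduct_neg, add_mulVec, dotProduct_add, t1, t2,
      hEmul, hEmul, sub_mulVec, one_mulVec]
    simp only [dotProduct, Pi.sub_apply]
    rw [← Finset.sum_add_distrib, ← Finset.sum_neg_distrib]
    exact Finset.sum_congr rfl fun i _ => by ring
  rw [key, ← Finset.mul_sum, Finset.sum_sub_distrib] at h0
  linarith

/-- Non-strict version of `specRad.quad_lt`. -/
lemma specRad.quad_le {n : ℕ} (A E : Matrix (Fin n) (Fin n) ℝ) (f : Fin n → ℝ)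
    (hEmul : ∀ w : Fin n → ℝ, E *ᵥ w = fun i => f i * w i)
    (h : (-((A - 1)ᵀ * E + E * (A - 1))).PosDef) (x : Fin n → ℝ) :
    ∑ i, f i * x i * (A *ᵥ x) i ≤ ∑ i, f i * (x i)^2 := by
  by_cases hx : x = 0
  · subst hx; simp
  · exact (specRad.quad_lt A E f hEmul h x hx).le

/-- a common diagonal Lyapunov solution for A−I, B−I implies robust
diffusive stability with respect to all admissible diagonal coupling matrices D. -/
theorem stmt2 {n : ℕ} (A B E : Matrix (Fin n) (Fin n) ℝ)
    (hA0 : ∀ i j, 0 ≤ A i j) (hB0 : ∀ i j, 0 ≤ B i j)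
    (hAs : specRad A < 1) (hBs : specRad B < 1)
    (hEdiag : E.IsDiag) (hEpos : E.PosDef)
    (hLA : (-((A - 1)ᵀ * E + E * (A - 1))).PosDef)
    (hLB : (-((B - 1)ᵀ * E + E * (B - 1))).PosDef) :
    ∀ D : Matrix (Fin n) (Fin n) ℝ, D.IsDiag → (∀ i j, 0 ≤ D i j) →
      (∀ i j, 0 ≤ (A - D) i j) → (∀ i j, 0 ≤ (B - D) i j) →
      specRad (Matrix.fromBlocks (A - D) D D (B - D)) < 1 := by
  intro D hDdiag hD0 hAD hBD
  set f : Fin n → ℝ := fun i => E i i with hf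
  set d : Fin n → ℝ := fun i => D i i with hd
  have hfpos : ∀ i, 0 < f i := by
    intro i
    have hne : (Pi.single i 1 : Fin n → ℝ) ≠ 0 := by
      intro h
      have := congrFun h i
      simp at this
    have := hEpos.dotProduct_mulVec_pos (x := Pi.single i 1) hne
    rw [star_trivial] at this
    simpa [dotProduct, mulVec, Pi.single_apply, Finset.mul_sum, mul_ite] using this
  have hEmul : ∀ w : Fin n → ℝ, E *ᵥ w = fun i => f i * w i := by
    intro w
    ext i
    rw [mulVec, dotProduct, Finset.sum_eq_single i
      (fun j _ hj => by rw [hEdiag (Ne.symm hj), zero_mul]) (by simp)]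
  have hDmul : ∀ (w : Fin n → ℝ) (i : Fin n), ∑ j, D i j * w j = d i * w i := by
    intro w i
    rw [Finset.sum_eq_single i
      (fun j _ hj => by rw [hDdiag (Ne.symm hj), zero_mul]) (by simp)]
  set M : Matrix (Fin n ⊕ Fin n) (Fin n ⊕ Fin n) ℝ :=
    Matrix.fromBlocks (A - D) D D (B - D) with hM
  apply specRad.lt_one_of_lyap M ?_ (Sum.elim f f) ?_
  · -- Lyapunov inequality
    intro y hy hy0
    set u : Fin n → ℝ := fun i => y (Sum.inl i) with hu
    set v : Fin n → ℝ := fun i => y (Sum.inr i) with hv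
    have hMulL : ∀ i, (M *ᵥ y) (Sum.inl i) = (A *ᵥ u) i - d i * u i + d i * v i := by
      intro i
      rw [mulVec, dotProduct, Fintype.sum_sum_type]
      simp only [hM, fromBlocks_apply₁₁, fromBlocks_apply₁₂, Matrix.sub_apply, sub_mul]
      rw [Finset.sum_sub_distrib, hDmul, hDmul]
      rw [mulVec, dotProduct]
    have hMulR : ∀ i, (M *ᵥ y) (Sum.inr i) = d i * u i + ((B *ᵥ v) i - d i * v i) := by
      intro i
      rw [mulVec, dotProduct, Fintype.sum_sum_type]
      simp only [hM, fromBlocks_apply₂₁, fromBlocks_apply₂₂, Matrix.sub_apply, sub_mul]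
      rw [Finset.sum_sub_distrib, hDmul, hDmul]
      rw [mulVec, dotProduct]
    have hLHS : ∑ i, Sum.elim f f i * y i * (M *ᵥ y) i
        = ((∑ i, f i * u i * (A *ᵥ u) i) + (∑ i, f i * v i * (B *ᵥ v) i))
          - ∑ i, f i * d i * (u i - v i)^2 := by
      rw [Fintype.sum_sum_type]
      simp only [Sum.elim_inl, Sum.elim_inr, hMulL, hMulR]
      rw [← Finset.sum_add_distrib, ← Finset.sum_add_distrib, ← Finset.sum_sub_distrib]
      exact Finset.sum_congr rfl fun i _ => by ring
    have hRHS : ∑ i, Sum.elim f f i * (y i)^2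
        = (∑ i, f i * (u i)^2) + ∑ i, f i * (v i)^2 := by
      rw [Fintype.sum_sum_type]
      simp only [Sum.elim_inl, Sum.elim_inr]
      rfl
    rw [hLHS, hRHS]
    have hSD : 0 ≤ ∑ i, f i * d i * (u i - v i)^2 :=
      Finset.sum_nonneg fun i _ =>
        mul_nonneg (mul_nonneg (hfpos i).le (hD0 i i)) (sq_nonneg _)
    have hne : u ≠ 0 ∨ v ≠ 0 := by
      by_contra hc
      push_neg at hc
      apply hy
      ext i
      cases i with
      | inl i => exact congrFun hc.1 i
      | inr i => exact congrFun hc.2 i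
    rcases hne with hu0 | hv0
    · have h1 := specRad.quad_lt A E f hEmul hLA u hu0
      have h2 := specRad.quad_le B E f hEmul hLB v
      linarith
    · have h1 := specRad.quad_le A E f hEmul hLA u
      have h2 := specRad.quad_lt B E f hEmul hLB v hv0
      linarith
  · -- nonnegativity of M
    intro i j
    cases i with
    | inl i => cases j with
      | inl j => exact hAD i j
      | inr j => exact hD0 i j
    | inr i => cases j with
      | inl j => exact hD0 i j
      | inr j => exact hBD i j
  · -- positivity of the weights
    intro i
    cases i with
    | inl i => exact hfpos i
    | inr i => exact hfpos i
end

section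
/- Let A = [[1/10, 1],[0, 0]] and B = [[1/10, 0],[1, 0]] as 2×2 real matrices. There exists no vector v ∈ ℝ² with both entries strictly positive such that v^T A ≪ v^T and v^T B ≪ v^T (entrywise strict inequalities). -/
open Matrix

/-- the matrices A = [[1/10, 1],[0, 0]] and B = [[1/10, 0],[1, 0]] admit
no common linear copositive Lyapunov function, i.e. no strictly positive v with
v^T A ≪ v^T and v^T B ≪ v^T. -/
theorem stmt4 :
    ¬ ∃ v : Fin 2 → ℝ, (∀ i, 0 < v i) ∧
      (∀ j, Matrix.vecMul v !![(1:ℝ)/10, 1; 0, 0] j < v j) ∧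
      (∀ j, Matrix.vecMul v !![(1:ℝ)/10, 0; 1, 0] j < v j) := by
  rintro ⟨v, hpos, hA, hB⟩
  have h1 := hA 1
  have h2 := hB 0
  simp [Matrix.vecMul, dotProduct, Fin.sum_univ_two] at h1 h2
  linarith [hpos 0, hpos 1]
end

section
/- Let A = [[1/10, 1],[0, 0]] and B = [[1/10, 0],[1, 0]] as 2×2 real matrices. There exists no positive definite diagonal matrix E ∈ ℝ^{2×2} such that both A^T E A − E and B^T E B − E are negative definite. -/
open Matrix

/-- the matrices A = [[1/10, 1],[0, 0]] and B = [[1/10, 0],[1, 0]] admit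
no common positive definite diagonal solution E of the Stein inequalities
AᵀEA − E ≺ 0, BᵀEB − E ≺ 0. -/
theorem stmt5 :
    ¬ ∃ E : Matrix (Fin 2) (Fin 2) ℝ, E.IsDiag ∧ E.PosDef ∧
      (-((!![(1:ℝ)/10, 1; 0, 0])ᵀ * E * !![(1:ℝ)/10, 1; 0, 0] - E)).PosDef ∧
      (-((!![(1:ℝ)/10, 0; 1, 0])ᵀ * E * !![(1:ℝ)/10, 0; 1, 0] - E)).PosDef := by
  rintro ⟨E, hD, hE, hA, hB⟩
  have h01 : E 0 1 = 0 := hD (by decide)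
  have h10 : E 1 0 = 0 := hD (by decide)
  have h1 := hA.dotProduct_mulVec_pos (x := (![0,1] : Fin 2 → ℝ)) (by simp [funext_iff, Fin.forall_fin_two])
  have h2 := hB.dotProduct_mulVec_pos (x := (![1,0] : Fin 2 → ℝ)) (by simp [funext_iff, Fin.forall_fin_two])
  have h0 := hE.dotProduct_mulVec_pos (x := (![1,0] : Fin 2 → ℝ)) (by simp [funext_iff, Fin.forall_fin_two])
  simp [Matrix.mulVec, dotProduct, Matrix.mul_apply, Fin.sum_univ_two, Matrix.vecHead, Matrix.vecTail, Matrix.transpose_apply, h01, h10] at h0 h1 h2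
  linarith
end

section
/- Let A, B ∈ ℝ^{n×n} be Schur-stable nonnegative matrices, and assume that at least one of A, B is irreducible. Suppose there exists a vector v ∈ ℝ^n with all entries strictly positive such that v^T A ≤ v^T, v^T B ≤ v^T (entrywise), and v^T(A + B) ≪ 2v^T (entrywise strict). Then for every diagonal nonnegative matrix D with A − D ≥ 0 and B − D ≥ 0 entrywise, the 2n×2n block matrix M = [[A−D, D],[D, B−D]] is Schur-stable, i.e., ρ(M) < 1. -/
open Matrix
open scoped ENNReal

/-- A matrix is reducible if the index set splits into two nonempty disjoint parts
I, J covering everything with A i j = 0 for all i ∈ I, j ∈ J. -/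
def Matrix.Reducible {n : ℕ} (A : Matrix (Fin n) (Fin n) ℝ) : Prop :=
  ∃ I J : Set (Fin n), I.Nonempty ∧ J.Nonempty ∧ Disjoint I J ∧ I ∪ J = Set.univ ∧
    ∀ i ∈ I, ∀ j ∈ J, A i j = 0

lemma one_le_specRad {m : Type*} [Fintype m] [DecidableEq m] (N : Matrix m m ℝ)
    (P : Set m) (hPne : P.Nonempty) (w : m → ℝ) (hw : ∀ i, 0 < w i)
    (hvan : ∀ j ∈ P, ∀ i, i ∉ P → N i j = 0)
    (hcol : ∀ j ∈ P, Matrix.vecMul w N j = w j) : (1 : ℝ≥0∞) ≤ specRad N := by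
  classical
  -- det (1 - N) = 0 over ℝ
  have hdet : ((1 : Matrix m m ℝ) - N).det = 0 := by
    set e : {x // x ∈ P} ⊕ {x // x ∉ P} ≃ m := Equiv.sumCompl (· ∈ P) with he
    set M' : Matrix ({x // x ∈ P} ⊕ {x // x ∉ P}) ({x // x ∈ P} ⊕ {x // x ∉ P}) ℝ :=
      ((1 : Matrix m m ℝ) - N).submatrix e e with hM'
    have hsub : M'.det = ((1 : Matrix m m ℝ) - N).det :=
      Matrix.det_submatrix_equiv_self e _
    have h21 : M'.toBlocks₂₁ = 0 := by
      ext i j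
      have hij : (i : m) ≠ (j : m) := by
        intro h
        exact i.2 (h ▸ j.2)
      simp [Matrix.toBlocks₂₁, hM', Matrix.submatrix_apply, he, Matrix.sub_apply,
        Matrix.one_apply_ne hij, hvan (j : m) j.2 (i : m) i.2]
    have hblocks : M' = Matrix.fromBlocks M'.toBlocks₁₁ M'.toBlocks₁₂ 0 M'.toBlocks₂₂ := by
      rw [← h21, Matrix.fromBlocks_toBlocks]
    have hdet11 : M'.toBlocks₁₁.det = 0 := by
      rw [← Matrix.exists_vecMul_eq_zero_iff]
      refine ⟨fun i => w i, ?_, ?_⟩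
      · obtain ⟨j0, hj0⟩ := hPne
        intro h
        have := congrFun h ⟨j0, hj0⟩
        exact absurd this (ne_of_gt (hw j0))
      · funext j
        have hsplit :
            (∑ i : {x // x ∈ P}, w i * ((1 : Matrix m m ℝ) - N) i (j : m))
              + (∑ i : {x // x ∉ P}, w i * ((1 : Matrix m m ℝ) - N) i (j : m))
            = ∑ i : m, w i * ((1 : Matrix m m ℝ) - N) i (j : m) := by
          have := Equiv.sum_comp e (fun i => w i * ((1 : Matrix m m ℝ) - N) i (j : m))
          rw [Fintype.sum_sum_type] at this
          simpa [he, Equiv.sumCompl_apply_inl, Equiv.sumCompl_apply_inr] using this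
        have hzero2 : (∑ i : {x // x ∉ P}, w i * ((1 : Matrix m m ℝ) - N) i (j : m)) = 0 := by
          apply Finset.sum_eq_zero
          intro i _
          have hij : (i : m) ≠ (j : m) := by
            intro h; exact i.2 (h ▸ j.2)
          simp [Matrix.sub_apply, Matrix.one_apply_ne hij, hvan (j : m) j.2 (i : m) i.2]
        have hfull : (∑ i : m, w i * ((1 : Matrix m m ℝ) - N) i (j : m)) = 0 := by
          have : Matrix.vecMul w ((1 : Matrix m m ℝ) - N) (j : m) = 0 := by
            rw [Matrix.vecMul_sub]
            simp [Matrix.vecMul_one, hcol (j : m) j.2]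
          simpa [Matrix.vecMul, dotProduct] using this
        have h1 : (∑ i : {x // x ∈ P}, w i * ((1 : Matrix m m ℝ) - N) i (j : m)) = 0 := by
          rw [← hsplit] at hfull
          linarith [hzero2, hfull]
        simpa [Matrix.vecMul, dotProduct, Matrix.toBlocks₁₁, hM',
          Matrix.submatrix_apply, he] using h1
      done
    rw [← hsub, hblocks, Matrix.det_fromBlocks_zero₂₁, hdet11, zero_mul]
  -- det over ℂ
  have hdetC : ((1 : Matrix m m ℂ) - N.map Complex.ofReal).det = 0 := by
    have hmap : ((1 : Matrix m m ℝ) - N).map (⇑Complex.ofRealHom)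
        = (1 : Matrix m m ℂ) - N.map Complex.ofReal := by
      rw [Matrix.map_sub _ (fun a b => by simp)]
      congr 1
      ext i j
      by_cases h : i = j <;> simp [Matrix.one_apply, h]
    have := RingHom.map_det Complex.ofRealHom ((1 : Matrix m m ℝ) - N)
    rw [RingHom.mapMatrix_apply, hmap, hdet] at this
    simpa using this.symm
  -- 1 ∈ spectrum
  have hmem : (1 : ℂ) ∈ spectrum ℂ (N.map Complex.ofReal) := by
    rw [spectrum.mem_iff]
    intro hu
    rw [_root_.map_one] at hu
    have := (Matrix.isUnit_iff_isUnit_det _).mp hu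
    rw [hdetC] at this
    exact not_isUnit_zero this
  have : (1 : ℝ≥0∞) = (‖(1 : ℂ)‖₊ : ℝ≥0∞) := by simp
  rw [specRad, spectralRadius, this]
  exact le_iSup₂ (f := fun (z : ℂ) (_ : z ∈ spectrum ℂ (N.map Complex.ofReal)) =>
    (‖z‖₊ : ℝ≥0∞)) (1 : ℂ) hmem

lemma pow_nonneg_mat {m : Type*} [Fintype m] [DecidableEq m] {N : Matrix m m ℝ}
    (hN : ∀ i j, 0 ≤ N i j) : ∀ k, ∀ i j, 0 ≤ (N ^ k) i j := by
  intro k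
  induction k with
  | zero => intro i j; by_cases h : i = j <;> simp [Matrix.one_apply, h]
  | succ k ih =>
      intro i j
      rw [pow_succ, Matrix.mul_apply]
      exact Finset.sum_nonneg fun l _ => mul_nonneg (ih i l) (hN l j)

lemma specRad_lt_one_of_pow {m : Type*} [Fintype m] [DecidableEq m] [Nonempty m]
    (N : Matrix m m ℝ) (hN : ∀ i j, 0 ≤ N i j) (w : m → ℝ) (hw : ∀ i, 0 < w i)
    (k : ℕ) (hk : ∀ j, Matrix.vecMul w (N ^ k) j < w j) : specRad N < 1 := by
  classical
  have hk0 : k ≠ 0 := by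
    intro h
    have := hk (Classical.arbitrary m)
    rw [h] at this
    simp [Matrix.vecMul_one] at this
  set Q := N ^ k with hQ
  have hQ0 : ∀ i j, 0 ≤ Q i j := pow_nonneg_mat hN k
  have hwQ0 : ∀ j, 0 ≤ Matrix.vecMul w Q j := by
    intro j
    exact Finset.sum_nonneg fun i _ => mul_nonneg (hw i).le (hQ0 i j)
  set θ : ℝ := Finset.univ.sup' Finset.univ_nonempty (fun j => Matrix.vecMul w Q j / w j) with hθdef
  have hθ1 : θ < 1 := by
    rw [hθdef, Finset.sup'_lt_iff]
    intro j _
    rw [div_lt_one (hw j)]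
    exact hk j
  have hθ0 : 0 ≤ θ := by
    obtain ⟨j⟩ := ‹Nonempty m›
    refine le_trans ?_ (Finset.le_sup' _ (Finset.mem_univ j))
    exact div_nonneg (hwQ0 j) (hw j).le
  have hθ : ∀ j, Matrix.vecMul w Q j ≤ θ * w j := by
    intro j
    have h := Finset.le_sup' (fun j => Matrix.vecMul w Q j / w j) (Finset.mem_univ j)
    exact (div_le_iff₀ (hw j)).mp h
  set c : ℝ := θ ^ ((k : ℝ)⁻¹) with hc
  have hc0 : 0 ≤ c := Real.rpow_nonneg hθ0 _
  have hck : c ^ k = θ := by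
    rw [hc, ← Real.rpow_natCast (θ ^ ((k : ℝ)⁻¹)) k, ← Real.rpow_mul hθ0,
      inv_mul_cancel₀ (by exact_mod_cast hk0 : (k : ℝ) ≠ 0), Real.rpow_one]
  have hc1 : c < 1 := Real.rpow_lt_one hθ0 hθ1 (by positivity)
  -- bound every spectrum element
  have key : ∀ z ∈ spectrum ℂ (N.map Complex.ofReal), ‖z‖ ≤ c := by
    intro z hz
    rw [spectrum.mem_iff] at hz
    have hdet : ((algebraMap ℂ (Matrix m m ℂ)) z - N.map Complex.ofReal).det = 0 := by
      by_contra h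
      exact hz ((Matrix.isUnit_iff_isUnit_det _).mpr (Ne.isUnit h))
    obtain ⟨x, hx0, hx⟩ := (Matrix.exists_mulVec_eq_zero_iff).mpr hdet
    have heig : (N.map Complex.ofReal) *ᵥ x = z • x := by
      have : ((algebraMap ℂ (Matrix m m ℂ)) z - N.map Complex.ofReal) *ᵥ x
          = z • x - (N.map Complex.ofReal) *ᵥ x := by
        rw [Matrix.sub_mulVec, Algebra.algebraMap_eq_smul_one, Matrix.smul_mulVec,
          Matrix.one_mulVec]
      rw [this] at hx
      linear_combination (norm := module) -hx
    have hmappow : ∀ j : ℕ, (N ^ j).map Complex.ofReal = (N.map Complex.ofReal) ^ j := by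
      intro j
      have := map_pow (Complex.ofRealHom.mapMatrix) N j
      exact this
    have heigpow : ∀ j : ℕ, (N.map Complex.ofReal) ^ j *ᵥ x = z ^ j • x := by
      intro j
      induction j with
      | zero => simp
      | succ j ih =>
          rw [pow_succ, ← Matrix.mulVec_mulVec, heig, Matrix.mulVec_smul, ih, smul_smul,
            ← pow_succ']
    have heigk : ((N ^ k).map Complex.ofReal) *ᵥ x = z ^ k • x := by
      rw [hmappow]
      exact heigpow k
    -- absolute values
    set y : m → ℝ := fun i => ‖x i‖ with hy
    have hy0 : ∀ i, 0 ≤ y i := fun i => norm_nonneg _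
    have hrow : ∀ i, ‖z‖ ^ k * y i ≤ ∑ j, Q i j * y j := by
      intro i
      have h1 : ‖z‖ ^ k * y i = ‖(z ^ k • x) i‖ := by
        simp [hy, Pi.smul_apply, smul_eq_mul, norm_mul, norm_pow]
      rw [h1, ← heigk]
      have : (((N ^ k).map Complex.ofReal) *ᵥ x) i = ∑ j, Complex.ofReal (Q i j) * x j := by
        simp [Matrix.mulVec, dotProduct, Matrix.map_apply, hQ]
      rw [this]
      refine le_trans (norm_sum_le _ _) ?_
      apply le_of_eq
      apply Finset.sum_congr rfl
      intro j _
      simp [norm_mul, abs_of_nonneg (hQ0 i j), hy]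
    set s : ℝ := ∑ i, w i * y i with hs
    have hspos : 0 < s := by
      have hxne : ∃ i, x i ≠ 0 := by
        by_contra h
        push_neg at h
        exact hx0 (funext h)
      obtain ⟨i0, hi0⟩ := hxne
      apply Finset.sum_pos'
      · intro i _; exact mul_nonneg (hw i).le (hy0 i)
      · exact ⟨i0, Finset.mem_univ i0, mul_pos (hw i0) (by simpa [hy] using hi0)⟩
    have hchain : ‖z‖ ^ k * s ≤ θ * s := by
      calc ‖z‖ ^ k * s = ∑ i, w i * (‖z‖ ^ k * y i) := by
            rw [hs, Finset.mul_sum]; apply Finset.sum_congr rfl; intro i _; ring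
        _ ≤ ∑ i, w i * (∑ j, Q i j * y j) := by
            apply Finset.sum_le_sum
            intro i _
            exact mul_le_mul_of_nonneg_left (hrow i) (hw i).le
        _ = ∑ i, ∑ j, w i * (Q i j * y j) := by
            apply Finset.sum_congr rfl; intro i _; rw [Finset.mul_sum]
        _ = ∑ j, ∑ i, w i * (Q i j * y j) := Finset.sum_comm
        _ = ∑ j, (Matrix.vecMul w Q j) * y j := by
            apply Finset.sum_congr rfl
            intro j _
            simp only [Matrix.vecMul, dotProduct, Finset.sum_mul]
            apply Finset.sum_congr rfl
            intro i _
            ring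
        _ ≤ ∑ j, (θ * w j) * y j := by
            apply Finset.sum_le_sum
            intro j _
            exact mul_le_mul_of_nonneg_right (hθ j) (hy0 j)
        _ = θ * s := by
            rw [hs, Finset.mul_sum]; apply Finset.sum_congr rfl; intro j _; ring
    have hzk : ‖z‖ ^ k ≤ θ := le_of_mul_le_mul_right hchain hspos
    rw [← hck] at hzk
    exact le_of_pow_le_pow_left₀ hk0 hc0 hzk
  rw [specRad, spectralRadius]
  have hle : (⨆ z ∈ spectrum ℂ (N.map Complex.ofReal), (‖z‖₊ : ℝ≥0∞)) ≤ ENNReal.ofReal c := by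
    refine iSup₂_le fun z hz => ?_
    rw [← ENNReal.ofReal_coe_nnreal, coe_nnnorm]
    exact ENNReal.ofReal_le_ofReal (key z hz)
  exact lt_of_le_of_lt hle (ENNReal.ofReal_lt_one.mpr hc1)

section Aux
open Matrix
open scoped ENNReal

variable {m : Type*} [Fintype m] [DecidableEq m]

lemma specRad_lt_one_empty [IsEmpty m] (N : Matrix m m ℝ) : specRad N < 1 := by
  haveI : Subsingleton (Matrix m m ℂ) := ⟨fun a b => by ext i j; exact isEmptyElim i⟩
  have hspec : spectrum ℂ (N.map Complex.ofReal) = ∅ := by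
    ext z
    simp only [Set.mem_empty_iff_false, iff_false]
    intro hz
    rw [spectrum.mem_iff] at hz
    exact hz (isUnit_of_subsingleton _)
  rw [specRad, spectralRadius, hspec]
  simp

end Aux

/-- if Schur-stable nonnegative A, B (at least one irreducible) admit a
joint linear copositive Lyapunov function, then the coupled system is robustly
diffusively stable with respect to all admissible diagonal coupling matrices. -/
theorem stmt6 {n : ℕ} (A B : Matrix (Fin n) (Fin n) ℝ)
    (hA0 : ∀ i j, 0 ≤ A i j) (hB0 : ∀ i j, 0 ≤ B i j)
    (hAs : specRad A < 1) (hBs : specRad B < 1)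
    (hirr : ¬ A.Reducible ∨ ¬ B.Reducible)
    (v : Fin n → ℝ) (hv : ∀ i, 0 < v i)
    (hvA : ∀ j, Matrix.vecMul v A j ≤ v j) (hvB : ∀ j, Matrix.vecMul v B j ≤ v j)
    (hvAB : ∀ j, Matrix.vecMul v (A + B) j < 2 * v j) :
    ∀ D : Matrix (Fin n) (Fin n) ℝ, D.IsDiag → (∀ i j, 0 ≤ D i j) →
      (∀ i j, 0 ≤ (A - D) i j) → (∀ i j, 0 ≤ (B - D) i j) →
      specRad (Matrix.fromBlocks (A - D) D D (B - D)) < 1 := by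
  intro D hDdiag hD0 hAD0 hBD0
  classical
  by_cases hn : n = 0
  · subst hn
    exact specRad_lt_one_empty _
  haveI : Nonempty (Fin n) := ⟨⟨0, Nat.pos_of_ne_zero hn⟩⟩
  set M : Matrix (Fin n ⊕ Fin n) (Fin n ⊕ Fin n) ℝ :=
    Matrix.fromBlocks (A - D) D D (B - D) with hMdef
  set u : Fin n ⊕ Fin n → ℝ := Sum.elim v v with hudef
  have hu0 : ∀ α, 0 < u α := by rintro (i | i) <;> exact hv i
  have hM0 : ∀ α β, 0 ≤ M α β := by
    rintro (i | i) (j | j)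
    · exact hAD0 i j
    · exact hD0 i j
    · exact hD0 i j
    · exact hBD0 i j
  have hDoff : ∀ i j : Fin n, i ≠ j → D i j = 0 := fun i j h => hDdiag h
  -- column computations
  have hcol1 : ∀ j, Matrix.vecMul u M (Sum.inl j) = Matrix.vecMul v A j := by
    intro j
    simp only [Matrix.vecMul, dotProduct]
    rw [Fintype.sum_sum_type]
    simp only [hudef, Sum.elim_inl, Sum.elim_inr, hMdef, Matrix.fromBlocks_apply₁₁,
      Matrix.fromBlocks_apply₂₁]
    rw [← Finset.sum_add_distrib]
    apply Finset.sum_congr rfl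
    intro i _
    rw [Matrix.sub_apply]
    ring
  have hcol2 : ∀ j, Matrix.vecMul u M (Sum.inr j) = Matrix.vecMul v B j := by
    intro j
    simp only [Matrix.vecMul, dotProduct]
    rw [Fintype.sum_sum_type]
    simp only [hudef, Sum.elim_inl, Sum.elim_inr, hMdef, Matrix.fromBlocks_apply₁₂,
      Matrix.fromBlocks_apply₂₂]
    rw [← Finset.sum_add_distrib]
    apply Finset.sum_congr rfl
    intro i _
    rw [Matrix.sub_apply]
    ring
  have huM : ∀ α, Matrix.vecMul u M α ≤ u α := by
    rintro (j | j)
    · rw [hcol1]; exact hvA j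
    · rw [hcol2]; exact hvB j
  -- iterates
  set w : ℕ → (Fin n ⊕ Fin n) → ℝ := fun k => Matrix.vecMul u (M ^ k) with hwdef
  have hw0 : w 0 = u := by simp [hwdef, Matrix.vecMul_one]
  have hwsucc : ∀ k, w (k + 1) = Matrix.vecMul (w k) M := by
    intro k
    rw [hwdef]
    simp only
    rw [pow_succ, ← Matrix.vecMul_vecMul]
  have hwexp : ∀ k α, w (k + 1) α = ∑ β, w k β * M β α := by
    intro k α
    rw [hwsucc k]
    rfl
  have hwle : ∀ k α, w k α ≤ u α := by
    intro k
    induction k with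
    | zero => intro α; rw [hw0]
    | succ k ih =>
        intro α
        rw [hwexp k α]
        calc (∑ β, w k β * M β α) ≤ ∑ β, u β * M β α :=
              Finset.sum_le_sum fun β _ => mul_le_mul_of_nonneg_right (ih β) (hM0 β α)
          _ = Matrix.vecMul u M α := rfl
          _ ≤ u α := huM α
  have hwanti : ∀ k α, w (k + 1) α ≤ w k α := by
    intro k
    induction k with
    | zero => intro α; rw [hwsucc 0, hw0]; exact huM α
    | succ k ih =>
        intro α
        rw [hwexp (k+1) α, hwexp k α]
        exact Finset.sum_le_sum fun β _ => mul_le_mul_of_nonneg_right (ih β) (hM0 β α)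
  -- sets of strict indices
  set T : ℕ → Finset (Fin n ⊕ Fin n) :=
    fun k => Finset.univ.filter (fun α => w k α < u α) with hTdef
  have hTmono : ∀ k, T k ⊆ T (k + 1) := by
    intro k α hα
    rw [hTdef, Finset.mem_filter] at hα ⊢
    exact ⟨Finset.mem_univ α, lt_of_le_of_lt (hwanti k α) hα.2⟩
  have hstable : ∃ K, T K = T (K + 1) := by
    by_contra h
    push_neg at h
    have hcard : ∀ k, k ≤ (T k).card := by
      intro k
      induction k with
      | zero => exact Nat.zero_le _
      | succ k ih =>
          have hss : T k ⊂ T (k + 1) := Finset.ssubset_iff_subset_ne.mpr ⟨hTmono k, h k⟩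
          exact Nat.succ_le_of_lt (lt_of_le_of_lt ih (Finset.card_lt_card hss))
    have := hcard (Fintype.card (Fin n ⊕ Fin n) + 1)
    have hle := Finset.card_le_univ (T (Fintype.card (Fin n ⊕ Fin n) + 1))
    omega
  obtain ⟨K, hK⟩ := hstable
  -- key consequences at stabilization
  have hstab : ∀ α, α ∉ T K → (Matrix.vecMul u M α = u α ∧ ∀ β ∈ T K, M β α = 0) := by
    intro α hα
    have hα' : α ∉ T (K + 1) := by rw [← hK]; exact hα
    have h1 : u α ≤ w (K + 1) α := by
      rw [hTdef, Finset.mem_filter] at hα'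
      push_neg at hα'
      exact hα' (Finset.mem_univ α)
    have hle1 : ∀ β, w K β * M β α ≤ u β * M β α :=
      fun β => mul_le_mul_of_nonneg_right (hwle K β) (hM0 β α)
    have hsum1 : (∑ β, w K β * M β α) ≤ ∑ β, u β * M β α :=
      Finset.sum_le_sum fun β _ => hle1 β
    have h2 : (∑ β, u β * M β α) = Matrix.vecMul u M α := rfl
    have h3 : Matrix.vecMul u M α ≤ u α := huM α
    have h4 : w (K + 1) α = ∑ β, w K β * M β α := hwexp K α
    have heq1 : (∑ β, w K β * M β α) = ∑ β, u β * M β α := by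
      rw [h2]; rw [h4] at h1; linarith
    have heqterm := (Finset.sum_eq_sum_iff_of_le (fun β _ => hle1 β)).mp heq1
    constructor
    · rw [← h2, ← heq1, ← h4]; linarith
    · intro β hβ
      have hβlt : w K β < u β := by
        rw [hTdef, Finset.mem_filter] at hβ
        exact hβ.2
      have := heqterm β (Finset.mem_univ β)
      by_contra hMβα
      have hpos : 0 < M β α := lt_of_le_of_ne (hM0 β α) (Ne.symm hMβα)
      have : w K β * M β α < u β * M β α := mul_lt_mul_of_pos_right hβlt hpos
      linarith [heqterm β (Finset.mem_univ β)]
  -- the stable set is everything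
  have hTuniv : T K = Finset.univ := by
    by_contra h
    have : ∃ α, α ∉ T K := by
      by_contra h'
      push_neg at h'
      exact h (Finset.eq_univ_iff_forall.mpr h')
    obtain ⟨α, hα⟩ := this
    obtain ⟨heqcol, hvan⟩ := hstab α hα
    rcases α with j | j
    · -- contradiction with stability of A
      refine absurd hAs (not_lt.mpr ?_)
      refine one_le_specRad A {i | Sum.inl i ∉ T K} ⟨j, hα⟩ v hv ?_ ?_
      · intro j' hj' i hi
        have hiT : Sum.inl i ∈ T K := not_not.mp hi
        have hij : i ≠ j' := by
          intro h'
          exact hj' (h' ▸ hiT)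
        have hADz : (A - D) i j' = 0 := (hstab (Sum.inl j') hj').2 (Sum.inl i) hiT
        have hDz : D i j' = 0 := hDoff i j' hij
        have := Matrix.sub_apply A D i j' ▸ hADz
        rw [Matrix.sub_apply] at hADz
        linarith
      · intro j' hj'
        have := (hstab (Sum.inl j') hj').1
        rw [hcol1 j'] at this
        simpa [hudef] using this
    · refine absurd hBs (not_lt.mpr ?_)
      refine one_le_specRad B {i | Sum.inr i ∉ T K} ⟨j, hα⟩ v hv ?_ ?_
      · intro j' hj' i hi
        have hiT : Sum.inr i ∈ T K := not_not.mp hi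
        have hij : i ≠ j' := by
          intro h'
          exact hj' (h' ▸ hiT)
        have hBDz : (B - D) i j' = 0 := (hstab (Sum.inr j') hj').2 (Sum.inr i) hiT
        have hDz : D i j' = 0 := hDoff i j' hij
        rw [Matrix.sub_apply] at hBDz
        linarith
      · intro j' hj'
        have := (hstab (Sum.inr j') hj').1
        rw [hcol2 j'] at this
        simpa [hudef] using this
  have hstrict : ∀ α, Matrix.vecMul u (M ^ K) α < u α := by
    intro α
    have : α ∈ T K := hTuniv ▸ Finset.mem_univ α
    rw [hTdef, Finset.mem_filter] at this
    exact this.2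
  exact specRad_lt_one_of_pow M hM0 u hu0 K hstrict
end

section
/- Let A, B ∈ ℝ^{n×n} be Schur-stable nonnegative matrices and D ∈ ℝ^{n×n} a nonnegative matrix with A − D ≥ 0 and B − D ≥ 0 entrywise. Suppose u, w ∈ ℝ^n are nonnegative vectors, not both zero, satisfying (A−D)u + Dw = u and Du + (B−D)w = w. Then u ≠ 0 and w ≠ 0. -/
open Matrix
open scoped ENNReal

lemma fixed_specRad {n : ℕ} (M : Matrix (Fin n) (Fin n) ℝ) (v : Fin n → ℝ)
    (hv : v ≠ 0) (h : M.mulVec v = v) :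
    1 ≤ spectralRadius ℂ (M.map Complex.ofReal) := by
  set Mc := M.map Complex.ofReal
  set vc : Fin n → ℂ := fun i => (v i : ℂ)
  have hvc : vc ≠ 0 := by
    intro hz
    apply hv
    funext i
    have := congrFun hz i
    simpa [vc] using this
  have hmul : Mc.mulVec vc = vc := by
    funext i
    have := congrFun h i
    simp only [mulVec, dotProduct, Mc, vc, Matrix.map_apply] at *
    exact_mod_cast congrArg Complex.ofReal this
  have hdet : (1 - Mc).det = 0 := by
    rw [← Matrix.exists_mulVec_eq_zero_iff]
    exact ⟨vc, hvc, by simp [sub_mulVec, hmul]⟩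
  have hmem : (1 : ℂ) ∈ spectrum ℂ Mc := by
    rw [spectrum.mem_iff]
    intro hun
    rw [Matrix.isUnit_iff_isUnit_det] at hun
    simp only [Algebra.algebraMap_eq_smul_one, one_smul] at hun
    rw [hdet] at hun
    exact not_isUnit_zero hun
  calc (1 : ℝ≥0∞) = ‖(1:ℂ)‖₊ := by simp
    _ ≤ spectralRadius ℂ Mc := le_iSup₂ (f := fun k (_ : k ∈ spectrum ℂ Mc) => (‖k‖₊ : ℝ≥0∞)) 1 hmem

/-- if (u; w) ≥ 0, not both zero, is a fixed point of the coupled block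
matrix [[A−D, D],[D, B−D]] with A, B Schur-stable nonnegative and D nonnegative with
A−D ≥ 0, B−D ≥ 0, then both u and w are nonzero. -/
theorem stmt8 {n : ℕ} (A B D : Matrix (Fin n) (Fin n) ℝ)
    (hA0 : ∀ i j, 0 ≤ A i j) (hB0 : ∀ i j, 0 ≤ B i j)
    (hAs : specRad A < 1) (hBs : specRad B < 1)
    (hD0 : ∀ i j, 0 ≤ D i j)
    (hAD : ∀ i j, 0 ≤ (A - D) i j) (hBD : ∀ i j, 0 ≤ (B - D) i j)
    (u w : Fin n → ℝ) (hu : ∀ i, 0 ≤ u i) (hw : ∀ i, 0 ≤ w i)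
    (hnz : ¬ (u = 0 ∧ w = 0))
    (h1 : (A - D).mulVec u + D.mulVec w = u)
    (h2 : D.mulVec u + (B - D).mulVec w = w) :
    u ≠ 0 ∧ w ≠ 0 := by
  constructor
  · intro hu0
    subst hu0
    have hw0 : w ≠ 0 := fun hw0 => hnz ⟨rfl, hw0⟩
    have hDw : D.mulVec w = 0 := by simpa [mulVec_zero] using h1
    have hBw : B.mulVec w = w := by
      have h2' : (B - D).mulVec w = w := by simpa [mulVec_zero] using h2
      have : B.mulVec w - D.mulVec w = w := by rwa [← sub_mulVec]
      simpa [hDw] using this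
    exact absurd hBs (not_lt.2 (fixed_specRad B w hw0 hBw))
  · intro hw0
    subst hw0
    have hu0 : u ≠ 0 := fun hu0 => hnz ⟨hu0, rfl⟩
    have hDu : D.mulVec u = 0 := by simpa [mulVec_zero] using h2
    have hAu : A.mulVec u = u := by
      have h1' : (A - D).mulVec u = u := by simpa [mulVec_zero] using h1
      have : A.mulVec u - D.mulVec u = u := by rwa [← sub_mulVec]
      simpa [hDu] using this
    exact absurd hAs (not_lt.2 (fixed_specRad A u hu0 hAu))
end

section
/- Let A, B ∈ ℝ^{n×n} be Schur-stable nonnegative matrices. Suppose there exists a vector v ∈ ℝ^n with all entries strictly positive such that v^T A ≤ v^T, v^T B ≤ v^T (entrywise), and v^T(A + B) ≪ 2v^T (entrywise strict). Suppose further that there exist a diagonal nonnegative matrix D with A − D ≥ 0, B − D ≥ 0 entrywise, and nonnegative vectors u, w ∈ ℝ^n, not both zero, satisfying (A−I)u = D(u−w) and (B−I)w = D(w−u). Then both A and B are reducible. -/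
open Matrix
open scoped ENNReal

lemma one_le_specRad_of_eig {n : ℕ} (M : Matrix (Fin n) (Fin n) ℝ) (x : Fin n → ℝ)
    (hx : x ≠ 0) (hMx : M.mulVec x = x) : 1 ≤ specRad M := by
  set M' : Matrix (Fin n) (Fin n) ℂ := M.map Complex.ofReal with hM'
  have hx' : (fun i => (x i : ℂ)) ≠ 0 := by
    intro h
    apply hx
    funext i
    have h2 : (x i : ℂ) = 0 := congrFun h i
    exact_mod_cast h2
  have hmv : (1 - M').mulVec (fun i => (x i : ℂ)) = 0 := by
    funext i
    have hMxi := congrFun hMx i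
    simp only [Matrix.sub_mulVec, Matrix.one_mulVec, Pi.sub_apply, Pi.zero_apply]
    have : M'.mulVec (fun i => (x i : ℂ)) i = ((M.mulVec x i : ℝ) : ℂ) := by
      simp [M', Matrix.mulVec, dotProduct, Matrix.map_apply]
    rw [this, hMxi, sub_self]
  have hdet : (1 - M').det = 0 := by
    rw [← Matrix.exists_mulVec_eq_zero_iff]
    exact ⟨_, hx', hmv⟩
  have hmem : (1 : ℂ) ∈ spectrum ℂ M' := by
    rw [spectrum.mem_iff]
    intro hunit
    rw [Matrix.isUnit_iff_isUnit_det, (algebraMap ℂ (Matrix (Fin n) (Fin n) ℂ)).map_one, hdet] at hunit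
    exact not_isUnit_zero hunit
  have : ((‖(1 : ℂ)‖₊ : ℝ≥0∞)) ≤ spectralRadius ℂ M' :=
    le_iSup₂ (f := fun (k : ℂ) (_ : k ∈ spectrum ℂ M') => (‖k‖₊ : ℝ≥0∞)) 1 hmem
  simpa [specRad, ← hM'] using this

/-- if Schur-stable nonnegative A, B admit a JLCLF v, and the eigenvalue-1
equations (A−I)u = D(u−w), (B−I)w = D(w−u) have a nonnegative, not-both-zero solution
(u, w) for some admissible diagonal coupling D, then both A and B are reducible. -/
theorem stmt9 {n : ℕ} (A B : Matrix (Fin n) (Fin n) ℝ)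
    (hA0 : ∀ i j, 0 ≤ A i j) (hB0 : ∀ i j, 0 ≤ B i j)
    (hAs : specRad A < 1) (hBs : specRad B < 1)
    (v : Fin n → ℝ) (hv : ∀ i, 0 < v i)
    (hvA : ∀ j, Matrix.vecMul v A j ≤ v j) (hvB : ∀ j, Matrix.vecMul v B j ≤ v j)
    (hvAB : ∀ j, Matrix.vecMul v (A + B) j < 2 * v j)
    (D : Matrix (Fin n) (Fin n) ℝ) (hDdiag : D.IsDiag) (hD0 : ∀ i j, 0 ≤ D i j)
    (hAD : ∀ i j, 0 ≤ (A - D) i j) (hBD : ∀ i j, 0 ≤ (B - D) i j)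
    (u w : Fin n → ℝ) (hu : ∀ i, 0 ≤ u i) (hw : ∀ i, 0 ≤ w i)
    (hnz : ¬ (u = 0 ∧ w = 0))
    (h1 : (A - 1).mulVec u = D.mulVec (u - w))
    (h2 : (B - 1).mulVec w = D.mulVec (w - u)) :
    A.Reducible ∧ B.Reducible := by
  classical
  -- diagonal action of D
  have hDmul : ∀ (x : Fin n → ℝ) (i : Fin n), D.mulVec x i = D i i * x i := by
    intro x i
    have hform : D.mulVec x i = ∑ j, D i j * x j := rfl
    rw [hform, Finset.sum_eq_single i]
    · intro b _ hb
      show D i b * x b = 0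
      rw [hDdiag (Ne.symm hb), zero_mul]
    · intro h; exact absurd (Finset.mem_univ i) h
  -- rearranged equations
  have e1 : ∀ i, A.mulVec u i - u i = D i i * (u i - w i) := by
    intro i
    have h1i := congrFun h1 i
    rw [Matrix.sub_mulVec, Matrix.one_mulVec] at h1i
    rw [hDmul (u - w) i] at h1i
    simpa using h1i
  have e2 : ∀ i, B.mulVec w i - w i = D i i * (w i - u i) := by
    intro i
    have h2i := congrFun h2 i
    rw [Matrix.sub_mulVec, Matrix.one_mulVec] at h2i
    rw [hDmul (w - u) i] at h2i
    simpa using h2i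
  -- u ≠ 0 and w ≠ 0
  have hune : u ≠ 0 := by
    intro hu0
    have hw0 : w ≠ 0 := fun hw0 => hnz ⟨hu0, hw0⟩
    have hu0' : ∀ i, u i = 0 := fun i => congrFun hu0 i
    have hAu : ∀ i, A.mulVec u i = 0 := by
      intro i; rw [hu0]; simp
    have hDw : ∀ i, D i i * w i = 0 := by
      intro i
      have h := e1 i
      rw [hAu i, hu0' i] at h
      have h3 : D i i * (0 - w i) = -(D i i * w i) := by ring
      linarith [h, h3]
    have hBw : B.mulVec w = w := by
      funext i
      have h := e2 i
      rw [hu0' i] at h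
      have h3 : D i i * (w i - 0) = D i i * w i := by ring
      rw [h3, hDw i] at h
      linarith [h]
    exact absurd (one_le_specRad_of_eig B w hw0 hBw) (not_le.mpr hBs)
  have hwne : w ≠ 0 := by
    intro hw0
    have hw0' : ∀ i, w i = 0 := fun i => congrFun hw0 i
    have hBw : ∀ i, B.mulVec w i = 0 := by
      intro i; rw [hw0]; simp
    have hDu : ∀ i, D i i * u i = 0 := by
      intro i
      have h := e2 i
      rw [hBw i, hw0' i] at h
      have h3 : D i i * (0 - u i) = -(D i i * u i) := by ring
      linarith [h, h3]
    have hAu : A.mulVec u = u := by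
      funext i
      have h := e1 i
      rw [hw0' i] at h
      have h3 : D i i * (u i - 0) = D i i * u i := by ring
      rw [h3, hDu i] at h
      linarith [h]
    exact absurd (one_le_specRad_of_eig A u hune hAu) (not_le.mpr hAs)
  -- sum identity: A u + B w = u + w
  have hsum : ∀ i, A.mulVec u i + B.mulVec w i = u i + w i := by
    intro i
    have h3 : D i i * (u i - w i) + D i i * (w i - u i) = 0 := by ring
    linarith [e1 i, e2 i, h3]
  -- dot with v, get termwise equalities
  have hkey : ∀ k, Matrix.vecMul v A k * u k = v k * u k ∧
      Matrix.vecMul v B k * w k = v k * w k := by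
    have hle : ∀ k ∈ Finset.univ, Matrix.vecMul v A k * u k + Matrix.vecMul v B k * w k ≤
        v k * u k + v k * w k := fun k _ =>
      add_le_add (mul_le_mul_of_nonneg_right (hvA k) (hu k))
        (mul_le_mul_of_nonneg_right (hvB k) (hw k))
    have hseq : ∑ k, (Matrix.vecMul v A k * u k + Matrix.vecMul v B k * w k) =
        ∑ k, (v k * u k + v k * w k) := by
      have hd : v ⬝ᵥ A.mulVec u + v ⬝ᵥ B.mulVec w = v ⬝ᵥ u + v ⬝ᵥ w := by
        have : v ⬝ᵥ (fun i => A.mulVec u i + B.mulVec w i) = v ⬝ᵥ (fun i => u i + w i) := by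
          congr 1; funext i; exact hsum i
        simpa [dotProduct, mul_add, Finset.sum_add_distrib] using this
      rw [Matrix.dotProduct_mulVec, Matrix.dotProduct_mulVec] at hd
      simpa [dotProduct, Finset.sum_add_distrib] using hd
    have := (Finset.sum_eq_sum_iff_of_le hle).mp hseq
    intro k
    have hk := this k (Finset.mem_univ k)
    have hA' := mul_le_mul_of_nonneg_right (hvA k) (hu k)
    have hB' := mul_le_mul_of_nonneg_right (hvB k) (hw k)
    constructor <;> linarith
  -- disjoint supports
  have hdisj : ∀ k, u k = 0 ∨ w k = 0 := by
    intro k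
    by_contra hc
    push_neg at hc
    have hu' : 0 < u k := lt_of_le_of_ne (hu k) (Ne.symm hc.1)
    have hw' : 0 < w k := lt_of_le_of_ne (hw k) (Ne.symm hc.2)
    have eA : Matrix.vecMul v A k = v k := mul_right_cancel₀ (ne_of_gt hu') (hkey k).1
    have eB : Matrix.vecMul v B k = v k := mul_right_cancel₀ (ne_of_gt hw') (hkey k).2
    have := hvAB k
    rw [Matrix.vecMul_add] at this
    simp only [Pi.add_apply] at this
    linarith
  -- generic reducibility construction
  have main : ∀ (M : Matrix (Fin n) (Fin n) ℝ) (x y : Fin n → ℝ), (∀ i j, 0 ≤ M i j) →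
      (∀ i, 0 ≤ x i) → (∀ i, 0 ≤ y i) → x ≠ 0 → y ≠ 0 → (∀ k, x k = 0 ∨ y k = 0) →
      (∀ i, M.mulVec x i - x i = D i i * (x i - y i)) → M.Reducible := by
    intro M x y hM0 hx hy hxne hyne hdis ee
    refine ⟨{i | x i = 0}, {i | x i ≠ 0}, ?_, ?_, ?_, ?_, ?_⟩
    · obtain ⟨k, hk⟩ := Function.ne_iff.mp hyne
      refine ⟨k, ?_⟩
      rcases hdis k with h | h
      · exact h
      · exact absurd h hk
    · obtain ⟨k, hk⟩ := Function.ne_iff.mp hxne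
      exact ⟨k, hk⟩
    · rw [Set.disjoint_iff]
      rintro i ⟨hi1, hi2⟩
      exact hi2 hi1
    · ext i; simp [em]
    · intro i hi j hj
      simp only [Set.mem_setOf_eq] at hi hj
      have hMx0 : M.mulVec x i = 0 := by
        have hei := ee i
        rw [hi] at hei
        have h1' : M.mulVec x i = -(D i i * y i) := by linarith [hei]
        have hform : M.mulVec x i = ∑ j, M i j * x j := rfl
        have hge : 0 ≤ M.mulVec x i := by
          rw [hform]
          exact Finset.sum_nonneg fun j _ => mul_nonneg (hM0 i j) (hx j)
        have hle : M.mulVec x i ≤ 0 := by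
          rw [h1']
          simp only [neg_nonpos]
          exact mul_nonneg (hD0 i i) (hy i)
        linarith
      have hform : M.mulVec x i = ∑ j, M i j * x j := rfl
      rw [hform] at hMx0
      have := (Finset.sum_eq_zero_iff_of_nonneg
        (fun j _ => mul_nonneg (hM0 i j) (hx j))).mp hMx0 j (Finset.mem_univ j)
      rcases mul_eq_zero.mp this with h | h
      · exact h
      · exact absurd h hj
  constructor
  · exact main A u w hA0 hu hw hune hwne hdisj e1
  · exact main B w u hB0 hw hu hwne hune (fun k => (hdisj k).symm)
      (fun i => e2 i)
end

section
/- Let A, B ∈ ℝ^{n×n} be Schur-stable nonnegative extended Leslie matrices, i.e., matrices whose possibly nonzero entries are exactly: the entire first row, the subdiagonal entries in positions (i+1, i) for i = 1,…,n−1, and the (n,n) entry. Let D ∈ ℝ^{n×n} be a nonnegative matrix whose only possibly nonzero entries lie in positions (i+1, i) for i = 1,…,n−1 and position (n,n), with A − D ≥ 0 and B − D ≥ 0 entrywise, and suppose D has at most one nonzero row. Then the 2n×2n block matrix M = [[A−D, D],[D, B−D]] is Schur-stable, i.e., ρ(M) < 1. -/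
open Matrix
open scoped ENNReal

/-- An extended Leslie matrix: nonnegative, with nonzero entries confined to the first
row, the subdiagonal positions (i+1, i), and the (n,n) (bottom-right) entry. -/
def IsExtLeslie {n : ℕ} (A : Matrix (Fin n) (Fin n) ℝ) : Prop :=
  (∀ i j, 0 ≤ A i j) ∧
  ∀ i j : Fin n, A i j ≠ 0 →
    (i : ℕ) = 0 ∨ (i : ℕ) = (j : ℕ) + 1 ∨ ((i : ℕ) = n - 1 ∧ (j : ℕ) = n - 1)

/-- A dispersal matrix for Leslie models: nonnegative, supported on the subdiagonal
positions (i+1, i) and the bottom-right entry. -/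
def IsLeslieDispersal {n : ℕ} (D : Matrix (Fin n) (Fin n) ℝ) : Prop :=
  (∀ i j, 0 ≤ D i j) ∧
  ∀ i j : Fin n, D i j ≠ 0 →
    (i : ℕ) = (j : ℕ) + 1 ∨ ((i : ℕ) = n - 1 ∧ (j : ℕ) = n - 1)

section Aux

open scoped NNReal

attribute [local instance] Matrix.linftyOpSemiNormedRing Matrix.linftyOpNormedRing
  Matrix.linftyOpNormedAlgebra

variable {m : Type*} [Fintype m] [DecidableEq m]

/-- If a nonnegative matrix has weighted row sums strictly less than the weights,
for some positive weight vector, then its spectral radius is less than one. -/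
theorem specRad_lt_one_of_rows (M : Matrix m m ℝ) (hM : ∀ i j, 0 ≤ M i j)
    (w : m → ℝ) (hw : ∀ i, 0 < w i) (h : ∀ i, ∑ j, M i j * w j < w i) :
    specRad M < 1 := by
  cases isEmpty_or_nonempty m with
  | inl hempty =>
      rw [specRad, spectralRadius, spectrum.of_subsingleton]
      simp
  | inr hne =>
      set c : m → ℂ := fun i => (w i : ℂ) with hc
      have hc0 : ∀ i, c i ≠ 0 := fun i => by
        simp only [hc, ne_eq, Complex.ofReal_eq_zero]
        exact (hw i).ne'
      have hUmul : Matrix.diagonal c * Matrix.diagonal (fun i => (c i)⁻¹) = 1 := by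
        rw [Matrix.diagonal_mul_diagonal,
          show (fun i => c i * (c i)⁻¹) = fun _ => (1 : ℂ) from
            funext fun i => mul_inv_cancel₀ (hc0 i), Matrix.diagonal_one]
      have hUmul' : Matrix.diagonal (fun i => (c i)⁻¹) * Matrix.diagonal c = 1 := by
        rw [Matrix.diagonal_mul_diagonal,
          show (fun i => (c i)⁻¹ * c i) = fun _ => (1 : ℂ) from
            funext fun i => inv_mul_cancel₀ (hc0 i), Matrix.diagonal_one]
      set U : (Matrix m m ℂ)ˣ :=
        ⟨Matrix.diagonal c, Matrix.diagonal (fun i => (c i)⁻¹), hUmul, hUmul'⟩ with hU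
      set Mc : Matrix m m ℂ := M.map Complex.ofReal with hMc
      set X : Matrix m m ℂ := (↑U⁻¹ : Matrix m m ℂ) * Mc * (↑U : Matrix m m ℂ) with hXdef
      have hspec : specRad M = spectralRadius ℂ X := by
        rw [specRad, hXdef]
        unfold spectralRadius
        rw [spectrum.units_conjugate']
      have hXentry : ∀ i j, X i j = (((w i)⁻¹ * M i j * w j : ℝ) : ℂ) := by
        intro i j
        have hXd : X = Matrix.diagonal (fun i => (c i)⁻¹) * Mc * Matrix.diagonal c := rfl
        rw [hXd, Matrix.mul_diagonal, Matrix.diagonal_mul]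
        simp only [hc, hMc, Matrix.map_apply]
        push_cast
        ring
      have hterm : ∀ i j, ‖X i j‖ = (w i)⁻¹ * M i j * w j := by
        intro i j
        rw [hXentry, Complex.norm_real, Real.norm_eq_abs, abs_of_nonneg]
        exact mul_nonneg (mul_nonneg (inv_nonneg.mpr (hw i).le) (hM i j)) (hw j).le
      rw [hspec]
      refine lt_of_le_of_lt (spectrum.spectralRadius_le_nnnorm X) ?_
      rw [show (1 : ℝ≥0∞) = ((1 : ℝ≥0) : ℝ≥0∞) from rfl, ENNReal.coe_lt_coe,
        Matrix.linfty_opNNNorm_def, Finset.sup_lt_iff (by norm_num : (⊥ : ℝ≥0) < 1)]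
      intro i _
      rw [← NNReal.coe_lt_coe, NNReal.coe_sum, NNReal.coe_one]
      calc ∑ j, (‖X i j‖₊ : ℝ)
          = ∑ j, (w i)⁻¹ * M i j * w j := Finset.sum_congr rfl fun j _ => by
            rw [coe_nnnorm, hterm i j]
        _ = (w i)⁻¹ * ∑ j, M i j * w j := by
            rw [Finset.mul_sum]
            exact Finset.sum_congr rfl fun j _ => by ring
        _ < (w i)⁻¹ * w i := by
            exact mul_lt_mul_of_pos_left (h i) (inv_pos.mpr (hw i))
        _ = 1 := inv_mul_cancel₀ (hw i).ne'

theorem pow_entry_nonneg (M : Matrix m m ℝ) (hM : ∀ i j, 0 ≤ M i j) (k : ℕ) :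
    ∀ i j, 0 ≤ (M ^ k) i j := by
  induction k with
  | zero =>
      intro i j
      rw [pow_zero]
      by_cases h : i = j <;> simp [Matrix.one_apply, h]
  | succ k ih =>
      intro i j
      rw [pow_succ, Matrix.mul_apply]
      exact Finset.sum_nonneg fun l _ => mul_nonneg (ih i l) (hM l j)

/-- A nonnegative matrix with spectral radius less than one admits a positive vector that
is strictly decreased (entrywise) by the matrix. -/
theorem exists_pos_vec (M : Matrix m m ℝ) (hM : ∀ i j, 0 ≤ M i j) (hs : specRad M < 1) :
    ∃ v : m → ℝ, (∀ i, 0 < v i) ∧ ∀ i, M.mulVec v i < v i := by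
  classical
  cases isEmpty_or_nonempty m with
  | inl hempty => exact ⟨fun _ => 1, fun i => isEmptyElim i, fun i => isEmptyElim i⟩
  | inr hne =>
  set Mc : Matrix m m ℂ := M.map Complex.ofReal with hMc
  have hg := spectrum.pow_nnnorm_pow_one_div_tendsto_nhds_spectralRadius Mc
  have hev : ∀ᶠ k : ℕ in Filter.atTop, (‖Mc ^ k‖₊ : ℝ≥0∞) ^ (1 / (k : ℝ)) < 1 :=
    hg.eventually_lt_const hs
  obtain ⟨N0, hN0⟩ := Filter.eventually_atTop.mp hev
  set N : ℕ := max N0 1 with hN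
  have hN1 : 1 ≤ N := le_max_right _ _
  have hNpos : (0 : ℝ) < (N : ℝ) := by exact_mod_cast hN1
  have h1 : (‖Mc ^ N‖₊ : ℝ≥0∞) ^ (1 / (N : ℝ)) < 1 := hN0 N (le_max_left _ _)
  have hlt : ‖Mc ^ N‖₊ < 1 := by
    by_contra hge
    push_neg at hge
    have h2 : ((1 : ℝ≥0) : ℝ≥0∞) ≤ (‖Mc ^ N‖₊ : ℝ≥0∞) := ENNReal.coe_le_coe.mpr hge
    have h3 : (1 : ℝ≥0∞) ^ (1 / (N : ℝ)) ≤ (‖Mc ^ N‖₊ : ℝ≥0∞) ^ (1 / (N : ℝ)) :=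
      ENNReal.rpow_le_rpow (by simpa using h2) (by positivity)
    rw [ENNReal.one_rpow] at h3
    exact absurd (lt_of_le_of_lt h3 h1) (lt_irrefl _)
  have mappow : ∀ k : ℕ, Mc ^ k = (M ^ k).map Complex.ofReal := by
    intro k
    induction k with
    | zero =>
        ext i j
        by_cases h : i = j <;> simp [Matrix.one_apply, Matrix.map_apply, h]
    | succ k ih =>
        rw [pow_succ, pow_succ, ih]
        ext i j
        simp only [Matrix.mul_apply, Matrix.map_apply, hMc]
        push_cast
        rfl
  have hrowN : ∀ i, ∑ j, (M ^ N) i j < 1 := by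
    intro i
    have hlt2 : ‖(M ^ N).map Complex.ofReal‖₊ < 1 := mappow N ▸ hlt
    rw [Matrix.linfty_opNNNorm_def] at hlt2
    have hi := lt_of_le_of_lt
      (Finset.le_sup (f := fun i => ∑ j, ‖((M ^ N).map Complex.ofReal) i j‖₊)
        (Finset.mem_univ i)) hlt2
    have hi' : ((∑ j, ‖((M ^ N).map Complex.ofReal) i j‖₊ : ℝ≥0) : ℝ) < 1 := by
      exact_mod_cast hi
    calc ∑ j, (M ^ N) i j
        = ((∑ j, ‖((M ^ N).map Complex.ofReal) i j‖₊ : ℝ≥0) : ℝ) := by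
          push_cast
          refine Finset.sum_congr rfl fun j _ => ?_
          rw [Matrix.map_apply, Complex.norm_real, Real.norm_eq_abs,
            abs_of_nonneg (pow_entry_nonneg M hM N i j)]
      _ < 1 := hi'
  set S : Matrix m m ℝ := ∑ k ∈ Finset.range N, M ^ k with hS
  set v : m → ℝ := S.mulVec (fun _ => 1) with hv
  have hsum : ∀ (x : m → ℝ) (i : m),
      S.mulVec x i = ∑ k ∈ Finset.range N, (M ^ k).mulVec x i := by
    intro x i
    show ∑ j, S i j * x j = _
    calc ∑ j, S i j * x j
        = ∑ j, ∑ k ∈ Finset.range N, (M ^ k) i j * x j := by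
          refine Finset.sum_congr rfl fun j _ => ?_
          rw [hS, Matrix.sum_apply, Finset.sum_mul]
      _ = ∑ k ∈ Finset.range N, ∑ j, (M ^ k) i j * x j := Finset.sum_comm
      _ = _ := rfl
  have hterm_nonneg : ∀ (k : ℕ) (i : m), 0 ≤ (M ^ k).mulVec (fun _ => 1) i := by
    intro k i
    show 0 ≤ ∑ j, (M ^ k) i j * 1
    exact Finset.sum_nonneg fun j _ =>
      mul_nonneg (pow_entry_nonneg M hM k i j) zero_le_one
  have hvpos : ∀ i, 0 < v i := by
    intro i
    rw [hv, hsum]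
    have h0 : (M ^ 0).mulVec (fun _ => 1) i = 1 := by
      rw [pow_zero, Matrix.one_mulVec]
    have hle : (M ^ 0).mulVec (fun _ => 1) i
        ≤ ∑ k ∈ Finset.range N, (M ^ k).mulVec (fun _ => 1) i :=
      Finset.single_le_sum (fun k _ => hterm_nonneg k i)
        (Finset.mem_range.mpr (lt_of_lt_of_le Nat.zero_lt_one hN1))
    rw [h0] at hle
    linarith
  have hMS : M * S = S + M ^ N - 1 := by
    have h1' : ∑ k ∈ Finset.range (N + 1), M ^ k
        = (∑ k ∈ Finset.range N, M ^ (k + 1)) + M ^ 0 := Finset.sum_range_succ' _ N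
    have h2' : ∑ k ∈ Finset.range (N + 1), M ^ k = S + M ^ N := by
      rw [hS, Finset.sum_range_succ]
    have h3' : M * S = ∑ k ∈ Finset.range N, M ^ (k + 1) := by
      rw [hS, Finset.mul_sum]
      exact Finset.sum_congr rfl fun k _ => (pow_succ' M k).symm
    rw [pow_zero] at h1'
    rw [h3', eq_sub_iff_add_eq]
    exact (h2'.symm.trans h1').symm
  refine ⟨v, hvpos, fun i => ?_⟩
  have hMv : M.mulVec v = (M * S).mulVec (fun _ => 1) := by
    rw [hv, Matrix.mulVec_mulVec]
  have hNv : (M ^ N).mulVec (fun _ => 1) i < 1 := by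
    have : (M ^ N).mulVec (fun _ => 1) i = ∑ j, (M ^ N) i j := by
      show ∑ j, (M ^ N) i j * 1 = _
      exact Finset.sum_congr rfl fun j _ => mul_one _
    rw [this]
    exact hrowN i
  have : M.mulVec v i = v i + (M ^ N).mulVec (fun _ => 1) i - 1 := by
    rw [hMv, hMS, Matrix.sub_mulVec, Matrix.add_mulVec, Matrix.one_mulVec]
    simp [hv]
  rw [this]
  linarith

end Aux

/-- for Schur-stable extended Leslie matrices A, B and an admissible
Leslie dispersal matrix D having at most one nonzero row, the coupled block matrix
[[A−D, D],[D, B−D]] is Schur-stable. -/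
theorem stmt11 {n : ℕ} (A B D : Matrix (Fin n) (Fin n) ℝ)
    (hA : IsExtLeslie A) (hB : IsExtLeslie B)
    (hAs : specRad A < 1) (hBs : specRad B < 1)
    (hD : IsLeslieDispersal D)
    (hAD : ∀ i j, 0 ≤ (A - D) i j) (hBD : ∀ i j, 0 ≤ (B - D) i j)
    (hrow : ∀ i₁ i₂ : Fin n, (∃ j, D i₁ j ≠ 0) → (∃ j, D i₂ j ≠ 0) → i₁ = i₂) :
    specRad (Matrix.fromBlocks (A - D) D D (B - D)) < 1 := by
  classical
  obtain ⟨vA, hvA, hvA'⟩ := exists_pos_vec A hA.1 hAs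
  obtain ⟨vB, hvB, hvB'⟩ := exists_pos_vec B hB.1 hBs
  rcases Nat.eq_zero_or_pos n with hn | hn
  · subst hn
    exact specRad_lt_one_of_rows _ (fun i => isEmptyElim i) (fun _ => 1)
      (fun i => isEmptyElim i) (fun i => isEmptyElim i)
  -- choose the (at most one) nonzero row of D
  obtain ⟨i₀, hz⟩ : ∃ i₀ : Fin n, ∀ i, i ≠ i₀ → ∀ j, D i j = 0 := by
    by_cases hD0 : ∃ i j, D i j ≠ 0
    · obtain ⟨i₀, j₀, hij⟩ := hD0
      refine ⟨i₀, fun i hi j => ?_⟩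
      by_contra hne
      exact hi (hrow i i₀ ⟨j, hne⟩ ⟨j₀, hij⟩)
    · push_neg at hD0
      exact ⟨⟨0, hn⟩, fun i _ j => hD0 i j⟩
  set a : ℝ := vA i₀ - A.mulVec vA i₀ with ha
  set b : ℝ := vB i₀ - B.mulVec vB i₀ with hb
  set p : ℝ := D.mulVec vA i₀ with hp
  set q : ℝ := D.mulVec vB i₀ with hq
  have ha0 : 0 < a := sub_pos.mpr (hvA' i₀)
  have hb0 : 0 < b := sub_pos.mpr (hvB' i₀)
  have hp0 : 0 ≤ p := by
    have : p = ∑ j, D i₀ j * vA j := rfl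
    rw [this]
    exact Finset.sum_nonneg fun j _ => mul_nonneg (hD.1 i₀ j) (hvA j).le
  have hq0 : 0 ≤ q := by
    have : q = ∑ j, D i₀ j * vB j := rfl
    rw [this]
    exact Finset.sum_nonneg fun j _ => mul_nonneg (hD.1 i₀ j) (hvB j).le
  have hq1 : (0 : ℝ) < 2 * (q + 1) := by linarith
  set t : ℝ := a * b / (2 * (q + 1)) with ht
  have ht0 : 0 < t := div_pos (mul_pos ha0 hb0) hq1
  have htq : t * q < a * b := by
    have heq : t * (2 * (q + 1)) = a * b := div_mul_cancel₀ _ (ne_of_gt hq1)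
    nlinarith [ht0, hq0]
  set α : ℝ := b + q with hα
  set β : ℝ := p + t with hβ
  have hα0 : 0 < α := by simp only [hα]; linarith
  have hβ0 : 0 < β := by simp only [hβ]; linarith
  have key1 : β * q < α * (a + p) := by
    simp only [hα, hβ]
    nlinarith [htq, mul_nonneg hb0.le hp0, mul_nonneg ha0.le hq0, mul_nonneg hp0 hq0]
  have key2 : α * p < β * (b + q) := by
    simp only [hα, hβ]
    nlinarith [mul_pos ht0 (by linarith : (0:ℝ) < b + q)]
  -- helper for weighted sums
  have sumTop : ∀ (X : Matrix (Fin n) (Fin n) ℝ) (c : ℝ) (u : Fin n → ℝ) (i : Fin n),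
      ∑ j, X i j * (c * u j) = c * X.mulVec u i := by
    intro X c u i
    show _ = c * ∑ j, X i j * u j
    rw [Finset.mul_sum]
    exact Finset.sum_congr rfl fun j _ => by ring
  apply specRad_lt_one_of_rows _ ?_
    (Sum.elim (fun i => α * vA i) (fun i => β * vB i)) ?_ ?_
  · rintro (i | i) (j | j)
    · simpa using hAD i j
    · simpa using hD.1 i j
    · simpa using hD.1 i j
    · simpa using hBD i j
  · rintro (i | i)
    · exact mul_pos hα0 (hvA i)
    · exact mul_pos hβ0 (hvB i)
  · rintro (i | i)
    · -- top rows
      rw [Fintype.sum_sum_type]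
      simp only [Matrix.fromBlocks_apply₁₁, Matrix.fromBlocks_apply₁₂, Sum.elim_inl,
        Sum.elim_inr]
      have e1 : ∑ j, (A - D) i j * (α * vA j)
          = α * A.mulVec vA i - α * D.mulVec vA i := by
        rw [show A - D = A - D from rfl]
        calc ∑ j, (A - D) i j * (α * vA j)
            = ∑ j, (A i j * (α * vA j) - D i j * (α * vA j)) := by
              refine Finset.sum_congr rfl fun j _ => ?_
              rw [Matrix.sub_apply]; ring
          _ = ∑ j, A i j * (α * vA j) - ∑ j, D i j * (α * vA j) :=
              Finset.sum_sub_distrib _ _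
          _ = _ := by rw [sumTop, sumTop]
      rw [e1, sumTop]
      by_cases hii : i = i₀
      · subst hii
        rw [← hp, ← hq]
        have expand : α * (a + p) = α * vA i - α * A.mulVec vA i + α * p := by
          rw [ha]; ring
        linarith [key1]
      · have hDv0 : D.mulVec vA i = 0 := by
          show ∑ j, D i j * vA j = 0
          simp [hz i hii]
        have hDv0' : D.mulVec vB i = 0 := by
          show ∑ j, D i j * vB j = 0
          simp [hz i hii]
        rw [hDv0, hDv0']
        have := mul_lt_mul_of_pos_left (hvA' i) hα0
        linarith
    · -- bottom rows
      rw [Fintype.sum_sum_type]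
      simp only [Matrix.fromBlocks_apply₂₁, Matrix.fromBlocks_apply₂₂, Sum.elim_inl,
        Sum.elim_inr]
      have e1 : ∑ j, (B - D) i j * (β * vB j)
          = β * B.mulVec vB i - β * D.mulVec vB i := by
        calc ∑ j, (B - D) i j * (β * vB j)
            = ∑ j, (B i j * (β * vB j) - D i j * (β * vB j)) := by
              refine Finset.sum_congr rfl fun j _ => ?_
              rw [Matrix.sub_apply]; ring
          _ = ∑ j, B i j * (β * vB j) - ∑ j, D i j * (β * vB j) :=
              Finset.sum_sub_distrib _ _
          _ = _ := by rw [sumTop, sumTop]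
      rw [e1, sumTop]
      by_cases hii : i = i₀
      · subst hii
        rw [← hp, ← hq]
        have expand : β * (b + q) = β * vB i - β * B.mulVec vB i + β * q := by
          rw [hb]; ring
        linarith [key2]
      · have hDv0 : D.mulVec vA i = 0 := by
          show ∑ j, D i j * vA j = 0
          simp [hz i hii]
        have hDv0' : D.mulVec vB i = 0 := by
          show ∑ j, D i j * vB j = 0
          simp [hz i hii]
        rw [hDv0, hDv0']
        have := mul_lt_mul_of_pos_left (hvB' i) hβ0
        linarith
end

section
/- Let A = [[0, 3/4],[1, 0]] and B = [[0, 1],[3/4, 0]] as 2×2 real matrices. Then: (1) there exists no vector v ∈ ℝ² with both entries strictly positive such that v^T A ≪ v^T and v^T B ≪ v^T (entrywise strict); but (2) the vector v = (1, 1) satisfies v^T A ≤ v^T, v^T B ≤ v^T (entrywise) and v^T(A + B) ≪ 2v^T (entrywise strict), i.e., v defines a joint linear copositive Lyapunov function for A and B. -/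
open Matrix

/-- for A = [[0, 3/4],[1, 0]] and B = [[0, 1],[3/4, 0]], there is no
common linear copositive Lyapunov function, but v = (1,1) is a joint linear copositive
Lyapunov function: vᵀA ≤ vᵀ, vᵀB ≤ vᵀ and vᵀ(A+B) ≪ 2vᵀ. -/
theorem stmt16 :
    (¬ ∃ v : Fin 2 → ℝ, (∀ i, 0 < v i) ∧
      (∀ j, Matrix.vecMul v !![(0:ℝ), 3/4; 1, 0] j < v j) ∧
      (∀ j, Matrix.vecMul v !![(0:ℝ), 1; 3/4, 0] j < v j)) ∧
    ((∀ j, Matrix.vecMul (![1, 1] : Fin 2 → ℝ) !![(0:ℝ), 3/4; 1, 0] j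
        ≤ (![1, 1] : Fin 2 → ℝ) j) ∧
     (∀ j, Matrix.vecMul (![1, 1] : Fin 2 → ℝ) !![(0:ℝ), 1; 3/4, 0] j
        ≤ (![1, 1] : Fin 2 → ℝ) j) ∧
     (∀ j, Matrix.vecMul (![1, 1] : Fin 2 → ℝ)
        (!![(0:ℝ), 3/4; 1, 0] + !![(0:ℝ), 1; 3/4, 0]) j
        < 2 * (![1, 1] : Fin 2 → ℝ) j)) := by
  constructor
  · rintro ⟨v, hv, hA, hB⟩
    have h0 := hA 0
    have h1 := hB 1
    simp [Matrix.vecMul, dotProduct, Fin.sum_univ_two] at h0 h1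
    linarith
  · refine ⟨fun j => ?_, fun j => ?_, fun j => ?_⟩ <;>
      fin_cases j <;>
      simp [Matrix.vecMul, dotProduct, Fin.sum_univ_two] <;> norm_num
end
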